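/- Let N ≥ 1 and let ρ be a separable state on ℋ_A ⊗ ℋ_B. Then there exists an operator σ ∈ 𝒮̃^N with tr σ = 1 such that ‖ρ − σ‖_∞ ≤ (d−1)/(N+d). (Concretely, σ = (N/(N+d)) ρ + (1/(N+d)) ρ_A ⊗ 𝕀_B works, where ρ_A = tr_B ρ.) -/

import Mathlib

/-!
Write `ρ = Σ cᵢ |ψᵢ⟩⟨ψᵢ| ⊗ |φᵢ⟩⟨φᵢ|` and `K = ρ_A ⊗ 𝕀`. Then
`Σ cᵢ ‖φᵢ‖^{-2(N-1)} |ψᵢ⟩⟨ψᵢ| ⊗ (|φᵢ⟩⟨φᵢ|)^{⊗N}` is a Bose-symmetric positive `N`-extension of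
`ρ`, so `ρ ∈ 𝒮^N`.
For the distance, `ρ - σ = (dρ - K)/(N+d)`. Separability gives the reduction criterion `ρ ≤ K`,
and `ρ_A ≤ (tr ρ_A) 𝕀 = 𝕀` gives `K ≤ 𝕀`; hence `(d-1)𝕀 - (dρ - K) = d(K - ρ) + (d-1)(𝕀 - K) ≥ 0`
and `dρ - K + (d-1)𝕀 = dρ + (𝕀 - K) + (d-2)𝕀 ≥ 0` (for `d = 1` simply `K = ρ`). In the
C⋆-algebra of matrices, `-(d-1) ≤ dρ - K ≤ d-1` bounds the operator norm by `d - 1`.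
-/

open Matrix MeasureTheory
open scoped Kronecker BigOperators ENNReal ComplexOrder

noncomputable section

namespace SepPaper

/-- The rank-one operator `|ψ⟩⟨ψ|`. -/
def proj {n : Type*} (ψ : n → ℂ) : Matrix n n ℂ := Matrix.vecMulVec ψ (star ψ)

/-- `Λ` is a separable operator on `ℂ^{dA} ⊗ ℂ^{d}`: a finite conical combination of
pure product operators `|ψ⟩⟨ψ| ⊗ |φ⟩⟨φ|`. -/
def IsSeparable (dA d : ℕ) (Λ : Matrix (Fin dA × Fin d) (Fin dA × Fin d) ℂ) : Prop :=
  ∃ (k : ℕ) (c : Fin k → ℝ) (ψ : Fin k → (Fin dA → ℂ)) (φ : Fin k → (Fin d → ℂ)),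
    (∀ i, 0 ≤ c i) ∧
    Λ = ∑ i, (c i : ℂ) • (proj (ψ i) ⊗ₖ proj (φ i))

/-- Partial trace over the `B` system. -/
def trB {dA d : ℕ} (M : Matrix (Fin dA × Fin d) (Fin dA × Fin d) ℂ) :
    Matrix (Fin dA) (Fin dA) ℂ :=
  fun a a' => ∑ b : Fin d, M (a, b) (a', b)

/-- Index type of `ℋ_A ⊗ ℋ_B ⊗ ℋ_B^{⊗(N-1)} = ℋ_A ⊗ ℋ_B^{⊗N}` (for `N ≥ 1`). -/
abbrev ExtIdx (dA d N : ℕ) := Fin dA × Fin d × (Fin (N - 1) → Fin d)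

/-- The orthogonal projector onto the symmetric subspace of `(ℂ^d)^{⊗N}`,
realized as the average of all permutation operators. -/
def symProj (d N : ℕ) : Matrix (Fin N → Fin d) (Fin N → Fin d) ℂ :=
  (N.factorial : ℂ)⁻¹ •
    ∑ π : Equiv.Perm (Fin N), Matrix.of (fun f g => if (fun i => g (π i)) = f then (1 : ℂ) else 0)

/-- Identification of `ℂ^d ⊗ (ℂ^d)^{⊗(N-1)}` with `(ℂ^d)^{⊗((N-1)+1)}`. -/
def bEquiv (d N : ℕ) : (Fin d × (Fin (N - 1) → Fin d)) ≃ (Fin (N - 1 + 1) → Fin d) :=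
  Fin.consEquiv (fun _ => Fin d)

/-- The symmetric projector on the `N = (N-1)+1` copies of `ℂ^d`,
viewed on the index type `Fin d × (Fin (N-1) → Fin d)`. -/
def symProjB (d N : ℕ) : Matrix (Fin d × (Fin (N - 1) → Fin d)) (Fin d × (Fin (N - 1) → Fin d)) ℂ :=
  Matrix.reindex (bEquiv d N).symm (bEquiv d N).symm (symProj d (N - 1 + 1))

/-- Partial trace over the last `N-1` copies of `ℋ_B`. -/
def ptraceExt {dA d N : ℕ} (M : Matrix (ExtIdx dA d N) (ExtIdx dA d N) ℂ) :
    Matrix (Fin dA × Fin d) (Fin dA × Fin d) ℂ :=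
  fun p q => ∑ g : Fin (N - 1) → Fin d, M (p.1, p.2, g) (q.1, q.2, g)

/-- Membership in `𝒮^N`: existence of a positive semidefinite Bose-symmetric
`N`-extension. -/
def MemSN (dA d N : ℕ) (Λ : Matrix (Fin dA × Fin d) (Fin dA × Fin d) ℂ) : Prop :=
  ∃ Λext : Matrix (ExtIdx dA d N) (ExtIdx dA d N) ℂ,
    Λext.PosSemidef ∧ ptraceExt Λext = Λ ∧
    Λext * ((1 : Matrix (Fin dA) (Fin dA) ℂ) ⊗ₖ symProjB d N) = Λext

/-- Partial transpose of an operator on `ℋ_A ⊗ ℋ_B^{⊗N}` w.r.t. the bipartition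
`(A and the first ⌈N/2⌉ copies of B) | (the last ⌊N/2⌋ copies of B)`.
Copy `0` of `B` is the explicit factor and the extra copy `i : Fin (N-1)` is copy
`i+1`; copy `j` is transposed iff `⌈N/2⌉ = (N+1)/2 ≤ j`. -/
def pt {dA d N : ℕ} (M : Matrix (ExtIdx dA d N) (ExtIdx dA d N) ℂ) :
    Matrix (ExtIdx dA d N) (ExtIdx dA d N) ℂ :=
  fun p q =>
    M (p.1, p.2.1, fun i => if (N + 1) / 2 ≤ (i : ℕ) + 1 then q.2.2 i else p.2.2 i)
      (q.1, q.2.1, fun i => if (N + 1) / 2 ≤ (i : ℕ) + 1 then p.2.2 i else q.2.2 i)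

/-- Membership in `𝒮_p^N`: existence of a positive semidefinite Bose-symmetric
`N`-extension which is moreover PPT w.r.t. the bipartition
`A B^{⌈N/2⌉} | B^{⌊N/2⌋}`. -/
def MemSNp (dA d N : ℕ) (Λ : Matrix (Fin dA × Fin d) (Fin dA × Fin d) ℂ) : Prop :=
  ∃ Λext : Matrix (ExtIdx dA d N) (ExtIdx dA d N) ℂ,
    Λext.PosSemidef ∧ ptraceExt Λext = Λ ∧
    Λext * ((1 : Matrix (Fin dA) (Fin dA) ℂ) ⊗ₖ symProjB d N) = Λext ∧
    (pt Λext).PosSemidef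

/-- Membership in `𝒮̃^N = {(N/(N+d)) σ + (1/(N+d)) σ_A ⊗ 𝕀_B : σ ∈ 𝒮^N}`. -/
def MemStildeN (dA d N : ℕ) (Λ : Matrix (Fin dA × Fin d) (Fin dA × Fin d) ℂ) : Prop :=
  ∃ σ, MemSN dA d N σ ∧
    Λ = ((N : ℂ) / ((N : ℂ) + d)) • σ +
        (1 / ((N : ℂ) + d)) • (trB σ ⊗ₖ (1 : Matrix (Fin d) (Fin d) ℂ))

/-- The Jacobi polynomial `P_n^{(α,β)}` (for natural parameters `α, β`). -/
def jacobiP (n α β : ℕ) (x : ℝ) : ℝ :=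
  ∑ s ∈ Finset.range (n + 1),
    (Nat.choose (n + α) (n - s) : ℝ) * (Nat.choose (n + β) s : ℝ) *
      ((x - 1) / 2) ^ s * ((x + 1) / 2) ^ (n - s)

/-- `ε_N = (d/(2(d-1))) · min {1 - x : P_{⌊N/2⌋+1}^{(d-2, N mod 2)}(x) = 0}`. -/
def epsN (d N : ℕ) : ℝ :=
  ((d : ℝ) / (2 * ((d : ℝ) - 1))) *
    sInf {y : ℝ | ∃ x : ℝ, y = 1 - x ∧ jacobiP (N / 2 + 1) (d - 2) (N % 2) x = 0}

/-- Membership in `𝒮̃_p^N = {(1-ε_N) σ + ε_N σ_A ⊗ 𝕀_B/d : σ ∈ 𝒮_p^N}`. -/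
def MemStildeNp (dA d N : ℕ) (Λ : Matrix (Fin dA × Fin d) (Fin dA × Fin d) ℂ) : Prop :=
  ∃ σ, MemSNp dA d N σ ∧
    Λ = ((1 : ℂ) - (epsN d N : ℂ)) • σ +
        ((epsN d N : ℂ) / d) • (trB σ ⊗ₖ (1 : Matrix (Fin d) (Fin d) ℂ))

/-- The trace norm `‖Z‖₁ = tr √(Z Zᴴ)`. -/
def traceNorm {n : Type*} [Fintype n] [DecidableEq n] (Z : Matrix n n ℂ) : ℝ :=
  (((Matrix.posSemidef_self_mul_conjTranspose Z).1.eigenvectorUnitary : Matrix n n ℂ) *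
      Matrix.diagonal (fun i => ((Real.sqrt ((Matrix.posSemidef_self_mul_conjTranspose Z).1.eigenvalues i) : ℝ) : ℂ)) *
      (star (Matrix.posSemidef_self_mul_conjTranspose Z).1.eigenvectorUnitary : Matrix n n ℂ)).trace.re

/-- The operator norm `‖Z‖_∞` (largest singular value), as the norm of the induced
operator on Euclidean space. -/
def opNorm {n : Type*} [Fintype n] [DecidableEq n] (Z : Matrix n n ℂ) : ℝ :=
  ‖LinearMap.toContinuousLinearMap (Matrix.toEuclideanLin Z)‖

/-- `(|φ⟩⟨φ|)^{⊗N}` on `ℋ_B^{⊗N} = ℋ_B ⊗ ℋ_B^{⊗(N-1)}`. -/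
def projPowExt {d : ℕ} (N : ℕ) (φ : Fin d → ℂ) :
    Matrix (Fin d × (Fin (N - 1) → Fin d)) (Fin d × (Fin (N - 1) → Fin d)) ℂ :=
  fun p q => proj φ p.1 q.1 * ∏ i, proj φ (p.2 i) (q.2 i)

/-- The optimal fidelity `F = sup {tr(ρ Λ) : Λ ∈ 𝒮, tr_B Λ = 𝕀_A}`. -/
def fid (dA d : ℕ) (ρ : Matrix (Fin dA × Fin d) (Fin dA × Fin d) ℂ) : ℝ :=
  sSup {r : ℝ | ∃ Λ, IsSeparable dA d Λ ∧ trB Λ = 1 ∧ r = ((ρ * Λ).trace).re}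

/-- `F̃^N = sup {tr(ρ Λ) : Λ ∈ 𝒮̃^N, tr_B Λ = 𝕀_A}`. -/
def fidTildeN (dA d N : ℕ) (ρ : Matrix (Fin dA × Fin d) (Fin dA × Fin d) ℂ) : ℝ :=
  sSup {r : ℝ | ∃ Λ, MemStildeN dA d N Λ ∧ trB Λ = 1 ∧ r = ((ρ * Λ).trace).re}

/-- `F̃_p^N = sup {tr(ρ Λ) : Λ ∈ 𝒮̃_p^N, tr_B Λ = 𝕀_A}`. -/
def fidTildeNp (dA d N : ℕ) (ρ : Matrix (Fin dA × Fin d) (Fin dA × Fin d) ℂ) : ℝ :=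
  sSup {r : ℝ | ∃ Λ, MemStildeNp dA d N Λ ∧ trB Λ = 1 ∧ r = ((ρ * Λ).trace).re}

/-- Robustness relative to a set `T` of operators:
`R_T(ρ) = inf {tr σ : σ ∈ T, ρ + σ ∈ T}` (with `inf ∅ = +∞`). -/
def rob {dA d : ℕ} (T : Set (Matrix (Fin dA × Fin d) (Fin dA × Fin d) ℂ))
    (ρ : Matrix (Fin dA × Fin d) (Fin dA × Fin d) ℂ) : ℝ≥0∞ :=
  sInf {t : ℝ≥0∞ | ∃ σ ∈ T, ρ + σ ∈ T ∧ t = ENNReal.ofReal ((σ.trace).re)}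


theorem _root_.IsSelfAdjoint.norm_le_of_neg_le_of_le {A : Type*} [CStarAlgebra A] [PartialOrder A]
    [StarOrderedRing A] {a : A} (ha : IsSelfAdjoint a) {r : ℝ} (hr : 0 ≤ r)
    (h₁ : -algebraMap ℝ A r ≤ a) (h₂ : a ≤ algebraMap ℝ A r) : ‖a‖ ≤ r := by
  obtain _ | _ := subsingleton_or_nontrivial A
  · simpa [Subsingleton.elim a 0] using hr
  rcases CStarAlgebra.norm_or_neg_norm_mem_spectrum ha with h | h
  · exact (le_algebraMap_iff_spectrum_le ha).mp h₂ _ h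
  · rw [← map_neg] at h₁
    linarith [(algebraMap_le_iff_le_spectrum ha).mp h₁ _ h]

section LoewnerOrder
open scoped MatrixOrder
variable {𝕜 n : Type*} [RCLike 𝕜] [Fintype n] [DecidableEq n]

theorem algebraMap_real_eq_smul_one (r : ℝ) :
    algebraMap ℝ (Matrix n n 𝕜) r = (r : 𝕜) • 1 := by
  rw [Algebra.algebraMap_eq_smul_one, RCLike.real_smul_eq_coe_smul (K := 𝕜)]

theorem _root_.Matrix.PosSemidef.trace_smul_one_sub {M : Matrix n n 𝕜} (hM : M.PosSemidef) :
    (M.trace • 1 - M).PosSemidef := by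
  have hle : M ≤ algebraMap ℝ (Matrix n n 𝕜) (RCLike.re M.trace) := by
    rw [le_algebraMap_iff_spectrum_le hM.isHermitian.isSelfAdjoint]
    rintro x hx
    obtain ⟨i, rfl⟩ := hM.isHermitian.spectrum_real_eq_range_eigenvalues ▸ hx
    rw [hM.isHermitian.trace_eq_sum_eigenvalues]
    simpa using Finset.single_le_sum (fun j _ => hM.eigenvalues_nonneg j) (Finset.mem_univ i)
  rwa [Matrix.le_iff, algebraMap_real_eq_smul_one, RCLike.conj_eq_iff_re.mp ?_] at hle
  rw [← RCLike.star_def, ← trace_conjTranspose, hM.isHermitian.eq]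

end LoewnerOrder

section OperatorNorm
open scoped Matrix.Norms.L2Operator MatrixOrder
variable {n : Type*} [Fintype n] [DecidableEq n]

theorem opNorm_le_of_posSemidef {Z : Matrix n n ℂ} {r : ℝ} (hr : 0 ≤ r)
    (h₁ : (Z + (r : ℂ) • 1).PosSemidef) (h₂ : ((r : ℂ) • 1 - Z).PosSemidef) :
    opNorm Z ≤ r := by
  have hle : Z ≤ algebraMap ℝ _ r := by rwa [Matrix.le_iff, algebraMap_real_eq_smul_one]
  have hge : -algebraMap ℝ _ r ≤ Z := by
    rwa [Matrix.le_iff, algebraMap_real_eq_smul_one, sub_neg_eq_add]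
  have hZ : IsSelfAdjoint Z := by
    simpa using (IsSelfAdjoint.algebraMap (Matrix n n ℂ) (.all r)).sub
      (sub_nonneg.mpr hle).isSelfAdjoint
  exact hZ.norm_le_of_neg_le_of_le hr hge hle

theorem opNorm_smul (c : ℂ) (Z : Matrix n n ℂ) : opNorm (c • Z) = ‖c‖ * opNorm Z :=
  norm_smul c Z

end OperatorNorm

section PartialTrace
variable {dA d : ℕ}

theorem trB_eq_sum_submatrix (M : Matrix (Fin dA × Fin d) (Fin dA × Fin d) ℂ) :
    trB M = ∑ b, M.submatrix (fun a => (a, b)) (fun a => (a, b)) := by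
  ext a a'
  simp [trB, Matrix.sum_apply]

theorem posSemidef_trB {M : Matrix (Fin dA × Fin d) (Fin dA × Fin d) ℂ} (hM : M.PosSemidef) :
    (trB M).PosSemidef := by
  rw [trB_eq_sum_submatrix]
  exact Matrix.posSemidef_sum _ fun b _ => hM.submatrix _

theorem trace_trB (M : Matrix (Fin dA × Fin d) (Fin dA × Fin d) ℂ) :
    (trB M).trace = M.trace := by
  simp [trB, Matrix.trace, Fintype.sum_prod_type]

theorem trB_kronecker_one_of_subsingleton [Subsingleton (Fin d)]
    (M : Matrix (Fin dA × Fin d) (Fin dA × Fin d) ℂ) :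
    trB M ⊗ₖ (1 : Matrix (Fin d) (Fin d) ℂ) = M := by
  ext ⟨a, b⟩ ⟨a', b'⟩
  obtain rfl := Subsingleton.elim b b'
  simp [trB, Fintype.sum_subsingleton _ b]

end PartialTrace

theorem posSemidef_proj {n : Type*} [Fintype n] (ψ : n → ℂ) : (proj ψ).PosSemidef :=
  Matrix.posSemidef_vecMulVec_self_star ψ

section Separable
variable {dA d : ℕ} {Λ : Matrix (Fin dA × Fin d) (Fin dA × Fin d) ℂ}

theorem IsSeparable.posSemidef (h : IsSeparable dA d Λ) : Λ.PosSemidef := by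
  obtain ⟨k, c, ψ, φ, hc, rfl⟩ := h
  exact Matrix.posSemidef_sum _ fun i _ =>
    ((posSemidef_proj _).kronecker (posSemidef_proj _)).smul (Complex.zero_le_real.mpr (hc i))

theorem IsSeparable.posSemidef_trB_kronecker_one_sub (h : IsSeparable dA d Λ) :
    (trB Λ ⊗ₖ (1 : Matrix (Fin d) (Fin d) ℂ) - Λ).PosSemidef := by
  obtain ⟨k, c, ψ, φ, hc, rfl⟩ := h
  have hdecomp : trB (∑ i, (c i : ℂ) • (proj (ψ i) ⊗ₖ proj (φ i))) ⊗ₖ 1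
      - ∑ i, (c i : ℂ) • (proj (ψ i) ⊗ₖ proj (φ i))
      = ∑ i, (c i : ℂ) • (proj (ψ i) ⊗ₖ ((proj (φ i)).trace • 1 - proj (φ i))) := by
    ext ⟨a, b⟩ ⟨a', b'⟩
    simp only [trB, Matrix.sub_apply, Matrix.sum_apply, Matrix.smul_apply, kroneckerMap_apply,
      Matrix.trace, diag, smul_eq_mul, Finset.sum_mul, mul_sub]
    rw [Finset.sum_comm, ← Finset.sum_sub_distrib]
    refine Finset.sum_congr rfl fun i _ => ?_
    simp only [Finset.mul_sum]
    congr 1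
    exact Finset.sum_congr rfl fun x _ => by ring
  rw [hdecomp]
  exact Matrix.posSemidef_sum _ fun i _ =>
    ((posSemidef_proj _).kronecker (posSemidef_proj _).trace_smul_one_sub).smul
      (Complex.zero_le_real.mpr (hc i))

end Separable

section SymmetricExtension
variable {dA d N : ℕ} {Λ Γ : Matrix (Fin dA × Fin d) (Fin dA × Fin d) ℂ}

theorem ptraceExt_add (E F : Matrix (ExtIdx dA d N) (ExtIdx dA d N) ℂ) :
    ptraceExt (E + F) = ptraceExt E + ptraceExt F := by
  ext p q
  simp [ptraceExt, Finset.sum_add_distrib]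

theorem ptraceExt_smul (c : ℂ) (E : Matrix (ExtIdx dA d N) (ExtIdx dA d N) ℂ) :
    ptraceExt (c • E) = c • ptraceExt E := by
  ext p q
  simp [ptraceExt, Finset.mul_sum]

theorem memSN_zero : MemSN dA d N 0 :=
  ⟨0, .zero, by ext; simp [ptraceExt], zero_mul _⟩

theorem MemSN.add (hΛ : MemSN dA d N Λ) (hΓ : MemSN dA d N Γ) : MemSN dA d N (Λ + Γ) := by
  obtain ⟨E, hE, rfl, hEsym⟩ := hΛ
  obtain ⟨F, hF, rfl, hFsym⟩ := hΓ
  exact ⟨E + F, hE.add hF, ptraceExt_add E F, by rw [Matrix.add_mul, hEsym, hFsym]⟩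

theorem MemSN.smul {c : ℂ} (hc : 0 ≤ c) (hΛ : MemSN dA d N Λ) : MemSN dA d N (c • Λ) := by
  obtain ⟨E, hE, rfl, hEsym⟩ := hΛ
  exact ⟨c • E, hE.smul hc, ptraceExt_smul c E, by rw [Matrix.smul_mul, hEsym]⟩

theorem memSN_sum {ι : Type*} [Fintype ι]
    (Λ : ι → Matrix (Fin dA × Fin d) (Fin dA × Fin d) ℂ)
    (h : ∀ i, MemSN dA d N (Λ i)) : MemSN dA d N (∑ i, Λ i) :=
  Finset.sum_induction _ _ (fun _ _ => MemSN.add) memSN_zero fun i _ => h i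

-- `ψ ⊗ φ^{⊗N}`
variable (N) in
def prodPowVec (ψ : Fin dA → ℂ) (φ : Fin d → ℂ) : ExtIdx dA d N → ℂ :=
  fun p => ψ p.1 * (φ p.2.1 * ∏ j, φ (p.2.2 j))

theorem star_prodPowVec (ψ : Fin dA → ℂ) (φ : Fin d → ℂ) :
    star (prodPowVec N ψ φ) = prodPowVec N (star ψ) (star φ) := by
  ext p
  simp [prodPowVec, star_prod]

theorem ptraceExt_proj_prodPowVec (ψ : Fin dA → ℂ) (φ : Fin d → ℂ) :
    ptraceExt (proj (prodPowVec N ψ φ))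
      = (star φ ⬝ᵥ φ) ^ (N - 1) • (proj ψ ⊗ₖ proj φ) := by
  ext ⟨a, b⟩ ⟨a', b'⟩
  have hsum : ∑ g : Fin (N - 1) → Fin d, ∏ j, φ (g j) * star (φ (g j))
      = (star φ ⬝ᵥ φ) ^ (N - 1) := by
    rw [← Fintype.prod_sum (fun _ x => φ x * star (φ x)), Finset.prod_const, Finset.card_univ,
      Fintype.card_fin, dotProduct_comm]
    rfl
  simp only [ptraceExt, proj, prodPowVec, Matrix.vecMulVec_apply, Pi.star_apply, star_mul',
    star_prod, Matrix.smul_apply, Matrix.kroneckerMap_apply, smul_eq_mul, ← hsum,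
    Finset.sum_mul, Finset.prod_mul_distrib]
  exact Finset.sum_congr rfl fun g _ => by ring

theorem prodVec_vecMul_symProj (m : ℕ) (χ : Fin d → ℂ) :
    (fun f : Fin m → Fin d => ∏ j, χ (f j)) ᵥ* symProj d m = fun f => ∏ j, χ (f j) := by
  ext F
  simp only [symProj, vecMul, dotProduct, Matrix.smul_apply, Matrix.sum_apply, of_apply, smul_eq_mul,
    Finset.mul_sum, mul_ite, mul_one, mul_zero]
  rw [Finset.sum_comm]
  simp only [Finset.sum_ite_eq, Finset.mem_univ, if_true, Equiv.prod_comp _ (fun j => χ (F j)),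
    Finset.sum_const, Finset.card_univ, Fintype.card_perm, Fintype.card_fin, nsmul_eq_mul]
  field_simp

theorem prodVec_vecMul_symProjB (χ : Fin d → ℂ) :
    (fun p : Fin d × (Fin (N - 1) → Fin d) => χ p.1 * ∏ j, χ (p.2 j)) ᵥ* symProjB d N
      = fun p => χ p.1 * ∏ j, χ (p.2 j) := by
  have hW : (fun p : Fin d × (Fin (N - 1) → Fin d) => χ p.1 * ∏ j, χ (p.2 j))
      = (fun f => ∏ j, χ (f j)) ∘ bEquiv d N := by
    ext p
    simp [bEquiv, Fin.prod_univ_succ]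
  rw [hW, symProjB, Matrix.reindex_apply, Equiv.symm_symm, Matrix.submatrix_vecMul_equiv,
    Function.comp_assoc, Equiv.self_comp_symm, Function.comp_id, prodVec_vecMul_symProj]

theorem prodPowVec_vecMul_one_kronecker_symProjB (u : Fin dA → ℂ) (χ : Fin d → ℂ) :
    prodPowVec N u χ ᵥ* ((1 : Matrix (Fin dA) (Fin dA) ℂ) ⊗ₖ symProjB d N)
      = prodPowVec N u χ := by
  ext ⟨a, bg⟩
  have := congrFun (prodVec_vecMul_symProjB (N := N) χ) bg
  simp only [Matrix.vecMul, dotProduct, mul_assoc] at this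
  simp only [Matrix.vecMul, dotProduct]
  rw [Fintype.sum_prod_type]
  simp only [prodPowVec, Matrix.kroneckerMap_apply, Matrix.one_apply, ite_mul, one_mul, zero_mul,
    mul_ite, mul_zero, Finset.sum_ite_irrel, Finset.sum_const_zero, Finset.sum_ite_eq',
    Finset.mem_univ, if_true, mul_assoc, ← Finset.mul_sum, this]

theorem proj_prodPowVec_mul_one_kronecker_symProjB (ψ : Fin dA → ℂ) (φ : Fin d → ℂ) :
    proj (prodPowVec N ψ φ) * ((1 : Matrix (Fin dA) (Fin dA) ℂ) ⊗ₖ symProjB d N)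
      = proj (prodPowVec N ψ φ) := by
  rw [proj, Matrix.vecMulVec_mul, star_prodPowVec, prodPowVec_vecMul_one_kronecker_symProjB]

theorem memSN_proj_kronecker_proj (ψ : Fin dA → ℂ) (φ : Fin d → ℂ) :
    MemSN dA d N (proj ψ ⊗ₖ proj φ) := by
  rcases eq_or_ne φ 0 with rfl | hφ
  · simpa [proj] using memSN_zero
  have hnorm : (star φ ⬝ᵥ φ) ^ (N - 1) ≠ 0 :=
    pow_ne_zero _ (dotProduct_star_self_eq_zero.not.mpr hφ)
  refine ⟨((star φ ⬝ᵥ φ) ^ (N - 1))⁻¹ • proj (prodPowVec N ψ φ),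
    (posSemidef_proj _).smul (inv_nonneg_of_nonneg (pow_nonneg (dotProduct_star_self_nonneg φ) _)),
    ?_, ?_⟩
  · rw [ptraceExt_smul, ptraceExt_proj_prodPowVec, smul_smul, inv_mul_cancel₀ hnorm, one_smul]
  · rw [Matrix.smul_mul, proj_prodPowVec_mul_one_kronecker_symProjB]

theorem IsSeparable.memSN (h : IsSeparable dA d Λ) : MemSN dA d N Λ := by
  obtain ⟨k, c, ψ, φ, hc, rfl⟩ := h
  exact memSN_sum _ fun i => (memSN_proj_kronecker_proj _ _).smul (Complex.zero_le_real.mpr (hc i))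

end SymmetricExtension

section Bound
variable {dA d : ℕ} {ρ : Matrix (Fin dA × Fin d) (Fin dA × Fin d) ℂ}

theorem posSemidef_one_sub_trB_kronecker_one (hρ : ρ.PosSemidef) (htr : ρ.trace = 1) :
    (1 - trB ρ ⊗ₖ (1 : Matrix (Fin d) (Fin d) ℂ)).PosSemidef := by
  have h := (posSemidef_trB hρ).trace_smul_one_sub
  rw [trace_trB, htr, one_smul] at h
  have hsplit : 1 - trB ρ ⊗ₖ (1 : Matrix (Fin d) (Fin d) ℂ)
      = (1 - trB ρ) ⊗ₖ (1 : Matrix (Fin d) (Fin d) ℂ) := by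
    ext ⟨a, b⟩ ⟨a', b'⟩
    by_cases hb : b = b' <;> simp [Matrix.one_apply, hb]
  rw [hsplit]
  exact h.kronecker .one

theorem opNorm_natCast_smul_sub_trB_kronecker_one_le (hd : 1 ≤ d) (hρ : IsSeparable dA d ρ)
    (htr : ρ.trace = 1) :
    opNorm ((d : ℂ) • ρ - trB ρ ⊗ₖ (1 : Matrix (Fin d) (Fin d) ℂ)) ≤ d - 1 := by
  obtain rfl | hd2 : d = 1 ∨ 2 ≤ d := by omega
  · simp [trB_kronecker_one_of_subsingleton, opNorm]
  set K := trB ρ ⊗ₖ (1 : Matrix (Fin d) (Fin d) ℂ)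
  have hρpos := hρ.posSemidef
  have hK : (1 - K).PosSemidef := posSemidef_one_sub_trB_kronecker_one hρpos htr
  have hKρ : (K - ρ).PosSemidef := hρ.posSemidef_trB_kronecker_one_sub
  refine opNorm_le_of_posSemidef (by linarith [(Nat.one_le_cast (α := ℝ)).mpr hd]) ?_ ?_
  · have h : (d : ℂ) • ρ - K + (((d : ℝ) - 1 : ℝ) : ℂ) • 1
        = (d : ℂ) • ρ + (1 - K) + ((d - 2 : ℕ) : ℂ) • 1 := by
      push_cast [Nat.cast_sub hd2]
      module
    rw [h]
    exact ((hρpos.smul (Nat.cast_nonneg' d)).add hK).add (PosSemidef.one.smul (Nat.cast_nonneg' _))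
  · have h : (((d : ℝ) - 1 : ℝ) : ℂ) • 1 - ((d : ℂ) • ρ - K)
        = (d : ℂ) • (K - ρ) + ((d - 1 : ℕ) : ℂ) • (1 - K) := by
      push_cast [Nat.cast_sub hd]
      module
    rw [h]
    exact (hKρ.smul (Nat.cast_nonneg' d)).add (hK.smul (Nat.cast_nonneg' _))

end Bound

theorem stmt1_general (dA d N : ℕ) (hd : 1 ≤ d)
    (ρ : Matrix (Fin dA × Fin d) (Fin dA × Fin d) ℂ)
    (hρsep : IsSeparable dA d ρ) (hρtr : ρ.trace = 1) :
    ∃ σ : Matrix (Fin dA × Fin d) (Fin dA × Fin d) ℂ,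
      σ = ((N : ℂ) / ((N : ℂ) + d)) • ρ +
          (1 / ((N : ℂ) + d)) • (trB ρ ⊗ₖ (1 : Matrix (Fin d) (Fin d) ℂ)) ∧
      MemStildeN dA d N σ ∧ σ.trace = 1 ∧
      opNorm (ρ - σ) ≤ ((d : ℝ) - 1) / ((N : ℝ) + d) := by
  set K := trB ρ ⊗ₖ (1 : Matrix (Fin d) (Fin d) ℂ)
  have hNd : (N : ℂ) + d ≠ 0 := by norm_cast; omega
  refine ⟨_, rfl, ⟨ρ, hρsep.memSN, rfl⟩, ?_, ?_⟩
  · rw [Matrix.trace_add, Matrix.trace_smul, Matrix.trace_smul, Matrix.trace_kronecker, trace_trB,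
      hρtr, Matrix.trace_one, Fintype.card_fin, smul_eq_mul, smul_eq_mul]
    field_simp
  · have hdiff : ρ - ((N / (N + d) : ℂ) • ρ + (1 / (N + d) : ℂ) • K)
        = ((N : ℂ) + d)⁻¹ • ((d : ℂ) • ρ - K) := by
      match_scalars
      · field_simp
        ring
      · field_simp
    have hnorm : ‖((N : ℂ) + d)⁻¹‖ = ((N : ℝ) + d)⁻¹ := by
      rw [norm_inv]
      norm_cast
    rw [hdiff, opNorm_smul, hnorm, div_eq_inv_mul]
    exact mul_le_mul_of_nonneg_left (opNorm_natCast_smul_sub_trB_kronecker_one_le hd hρsep hρtr)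
      (by positivity)

/-- every separable state is within operator-norm distance
`(d-1)/(N+d)` of a normalized element of `𝒮̃^N`; concretely
`σ = (N/(N+d)) ρ + (1/(N+d)) ρ_A ⊗ 𝕀_B` works. -/
theorem stmt1 (dA d N : ℕ) (hdA : 1 ≤ dA) (hd : 1 ≤ d) (hN : 1 ≤ N)
    (ρ : Matrix (Fin dA × Fin d) (Fin dA × Fin d) ℂ)
    (hρsep : IsSeparable dA d ρ) (hρtr : ρ.trace = 1) :
    ∃ σ : Matrix (Fin dA × Fin d) (Fin dA × Fin d) ℂ,
      σ = ((N : ℂ) / ((N : ℂ) + d)) • ρ +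
          (1 / ((N : ℂ) + d)) • (trB ρ ⊗ₖ (1 : Matrix (Fin d) (Fin d) ℂ)) ∧
      MemStildeN dA d N σ ∧ σ.trace = 1 ∧
      opNorm (ρ - σ) ≤ ((d : ℝ) - 1) / ((N : ℝ) + d) :=
  stmt1_general dA d N hd ρ hρsep hρtr

end SepPaper
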